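/- For 1/2 < ν < 1 and 0 < ε ≤ 1, the Riemann map Ψ_ε from the domain Ω_ε = {z^ν : z ∈ B(i(ε + 1/(2ε)), 1/(2ε))} onto the upper half plane, given by Ψ_ε(z) = (z^{1/ν} - iε)/(1 + ε² + iε z^{1/ν}), satisfies for all z₁, z₂ ∈ Ω_ε: |Ψ_ε(z₁) - Ψ_ε(z₂)| is comparable (with universal constants) to (1/ε²) · |z₁^{1/ν} - z₂^{1/ν}| / (|z₁^{1/ν} - c(ε)| · |z₂^{1/ν} - c(ε)|), where c(ε) = i(ε + 1/ε). -/

import Mathlib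

/-- The approximating domain Ω_ε = {z^ν : z ∈ B(i(ε + 1/(2ε)), 1/(2ε))}. -/
noncomputable def OmegaEps (ν ε : ℝ) : Set ℂ :=
  (fun z : ℂ => z ^ ((ν : ℂ))) '' Metric.ball (Complex.I * ((ε : ℂ) + 1/(2*ε))) (1/(2*ε))

/-- The Riemann map Ψ_ε from Ω_ε onto the upper half plane. -/
noncomputable def PsiEps (ν ε : ℝ) (z : ℂ) : ℂ :=
  (z ^ ((1/(ν:ℂ))) - Complex.I * ε) / (1 + (ε:ℂ)^2 + Complex.I * ε * z ^ ((1/(ν:ℂ))))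

/-- c(ε) = i(ε + 1/ε). -/
noncomputable def cEps (ε : ℝ) : ℂ := Complex.I * ((ε : ℂ) + 1/ε)

/-!
Writing w = z^{1/ν}, the map Ψ_ε is the Möbius transformation
w ↦ (w - iε) / (iε (w - c(ε))), whose pole is c(ε). For a Möbius map the difference
identity M(w₁) - M(w₂) = -(w₁ - w₂) / (ε² (w₁ - c(ε)) (w₂ - c(ε))) is exact, so the two
sides are in fact equal and both constants can be taken to be 1. It remains to see that
z^{1/ν} is never c(ε) on Ω_ε: since 0 < ν ≤ 1, taking principal powers u ↦ u^ν keeps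
ν·arg u in (-π, π], so z ↦ z^{1/ν} inverts it, and c(ε) lies on the boundary of the disc
B(i(ε + 1/(2ε)), 1/(2ε)).
-/

open Complex

theorem Complex.cpow_ofReal_cpow_one_div (u : ℂ) {ν : ℝ} (hν₀ : 0 < ν)
    (hν₁ : ν ≤ 1) : (u ^ (ν : ℂ)) ^ (1 / (ν : ℂ)) = u := by
  have him : (log u * ν).im = ν * u.arg := by simp [mul_comm, log_im]
  have hlower : -Real.pi < ν * u.arg := by
    nlinarith [neg_pi_lt_arg u, Real.pi_pos]
  have hupper : ν * u.arg ≤ Real.pi := by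
    rcases le_or_gt 0 u.arg with h | h
    · nlinarith [arg_le_pi u]
    · nlinarith [Real.pi_pos]
  rw [← cpow_mul _ (him ▸ hlower) (him ▸ hupper),
    mul_one_div_cancel (ofReal_ne_zero.2 hν₀.ne'), cpow_one]

theorem one_add_sq_add_I_mul_eq {ε : ℝ} (hε : ε ≠ 0) (w : ℂ) :
    1 + (ε : ℂ) ^ 2 + I * ε * w = I * ε * (w - cEps ε) := by
  have hε' : (ε : ℂ) ≠ 0 := ofReal_ne_zero.2 hε
  unfold cEps
  field_simp
  ring_nf
  simp only [I_sq]
  ring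

theorem moebius_sub_eq {ε : ℝ} (hε : ε ≠ 0) {w₁ w₂ : ℂ} (h₁ : w₁ ≠ cEps ε)
    (h₂ : w₂ ≠ cEps ε) :
    (w₁ - I * ε) / (1 + (ε : ℂ) ^ 2 + I * ε * w₁) - (w₂ - I * ε) / (1 + (ε : ℂ) ^ 2 + I * ε * w₂)
      = -(w₁ - w₂) / (ε ^ 2 * ((w₁ - cEps ε) * (w₂ - cEps ε))) := by
  have hε' : (ε : ℂ) ≠ 0 := ofReal_ne_zero.2 hε
  rw [one_add_sq_add_I_mul_eq hε, one_add_sq_add_I_mul_eq hε,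
    div_sub_div _ _ (by simp [hε', sub_ne_zero.2 h₁]) (by simp [hε', sub_ne_zero.2 h₂])]
  have hnum : (w₁ - I * ε) * (I * ε * (w₂ - cEps ε)) - I * ε * (w₁ - cEps ε) * (w₂ - I * ε)
      = w₁ - w₂ := by
    unfold cEps
    field_simp
    ring_nf
    simp only [I_sq]
    ring
  have hden : I * ε * (w₁ - cEps ε) * (I * ε * (w₂ - cEps ε))
      = -(ε ^ 2 * ((w₁ - cEps ε) * (w₂ - cEps ε))) := by
    linear_combination (ε : ℂ) ^ 2 * (w₁ - cEps ε) * (w₂ - cEps ε) * I_sq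
  rw [hnum, hden, div_neg, neg_div]

theorem norm_moebius_sub {ε : ℝ} (hε : ε ≠ 0) {w₁ w₂ : ℂ} (h₁ : w₁ ≠ cEps ε)
    (h₂ : w₂ ≠ cEps ε) :
    ‖(w₁ - I * ε) / (1 + (ε : ℂ) ^ 2 + I * ε * w₁) - (w₂ - I * ε) / (1 + (ε : ℂ) ^ 2 + I * ε * w₂)‖
      = 1 / ε ^ 2 * ‖w₁ - w₂‖ / (‖w₁ - cEps ε‖ * ‖w₂ - cEps ε‖) := by
  rw [moebius_sub_eq hε h₁ h₂, norm_div, norm_neg, norm_mul, norm_mul, norm_pow, norm_real,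
    Real.norm_eq_abs, sq_abs]
  ring

theorem cEps_notMem_ball_I_mul (ε : ℝ) :
    cEps ε ∉ Metric.ball (I * ((ε : ℂ) + 1 / (2 * ε))) (1 / (2 * ε)) := by
  have hdiff : cEps ε - I * ((ε : ℂ) + 1 / (2 * ε)) = I * ((1 / (2 * ε) : ℝ) : ℂ) := by
    unfold cEps
    push_cast
    ring
  rw [Metric.mem_ball, dist_eq, hdiff, norm_mul, norm_I, one_mul, norm_real, Real.norm_eq_abs]
  exact not_lt.2 (le_abs_self _)

theorem cpow_one_div_ne_cEps_of_mem_OmegaEps {ν ε : ℝ} (hν₀ : 0 < ν) (hν₁ : ν ≤ 1) {z : ℂ}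
    (hz : z ∈ OmegaEps ν ε) : z ^ (1 / (ν : ℂ)) ≠ cEps ε := by
  obtain ⟨u, hu, rfl⟩ := hz
  rw [cpow_ofReal_cpow_one_div u hν₀ hν₁]
  exact fun h => cEps_notMem_ball_I_mul ε (h ▸ hu)

theorem PsiEps_difference_comparable :
    ∃ c > 0, ∃ C > 0, ∀ (ν ε : ℝ), 1/2 < ν → ν < 1 → 0 < ε → ε ≤ 1 →
      ∀ z₁ ∈ OmegaEps ν ε, ∀ z₂ ∈ OmegaEps ν ε,
        c * ((1/ε^2) * ‖z₁ ^ ((1/(ν:ℂ))) - z₂ ^ ((1/(ν:ℂ)))‖ /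
              (‖z₁ ^ ((1/(ν:ℂ))) - cEps ε‖ * ‖z₂ ^ ((1/(ν:ℂ))) - cEps ε‖))
          ≤ ‖PsiEps ν ε z₁ - PsiEps ν ε z₂‖ ∧
        ‖PsiEps ν ε z₁ - PsiEps ν ε z₂‖ ≤
          C * ((1/ε^2) * ‖z₁ ^ ((1/(ν:ℂ))) - z₂ ^ ((1/(ν:ℂ)))‖ /
              (‖z₁ ^ ((1/(ν:ℂ))) - cEps ε‖ * ‖z₂ ^ ((1/(ν:ℂ))) - cEps ε‖)) := by
  refine ⟨1, one_pos, 1, one_pos, fun ν ε hν_half hν₁ hε _ z₁ hz₁ z₂ hz₂ => ?_⟩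
  have hν₀ : 0 < ν := by linarith
  rw [PsiEps, PsiEps, norm_moebius_sub hε.ne'
    (cpow_one_div_ne_cEps_of_mem_OmegaEps hν₀ hν₁.le hz₁)
    (cpow_one_div_ne_cEps_of_mem_OmegaEps hν₀ hν₁.le hz₂), one_mul]
  exact ⟨le_rfl, le_rfl⟩
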